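/- arXiv:1210.3526 — 4 statements merged into one kernel-verified Lean document; each statement's English description precedes it below -/
import Mathlib

section
/- Let λ₁, …, λ_N be finitely many complex numbers. Then there exist infinitely many integers n ≥ 1 such that |λ₁|ⁿ ≤ |λ₁ⁿ + λ₂ⁿ + ⋯ + λ_Nⁿ|. -/
/-!
Divide by `λ₁ ^ n` and write `λᵢ / λ₁ = rᵢ uᵢ` with `rᵢ ≥ 0` and `|uᵢ| = 1`. Recurrence in the
compact group `(S¹)ᴺ⁺¹` gives infinitely many `n ≥ 1` with `Re uᵢⁿ > 0` for all `i`; for those `n`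
every term of `∑ (λᵢ / λ₁)ⁿ` has nonnegative real part and the first one equals `1`, so the sum
has norm at least `1`.
-/

open Filter Topology Complex

/-- Two powers `x ^ i`, `x ^ j` close to a cluster point of `(x ^ n)` differ by `x ^ (j - i)`,
which is then close to `1`. -/
theorem frequently_pow_mem_nhds_one {G : Type*} [Group G] [TopologicalSpace G]
    [IsTopologicalGroup G] [CompactSpace G] (x : G) {U : Set G} (hU : U ∈ 𝓝 1) :
    ∃ᶠ n in atTop, x ^ n ∈ U := by
  obtain ⟨p, hp⟩ := exists_clusterPt_of_compactSpace (map (x ^ ·) atTop)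
  have hdiv : Tendsto (fun ab : G × G => ab.2 * ab.1⁻¹) (𝓝 p ×ˢ 𝓝 p) (𝓝 1) := by
    rw [← nhds_prod_eq, ← mul_inv_cancel p]
    exact (continuous_snd.mul continuous_fst.inv).tendsto (p, p)
  obtain ⟨W, hW, hWU⟩ := mem_prod_same_iff.1 (hdiv hU)
  have hvisit : ∃ᶠ n in atTop, x ^ n ∈ W := MapClusterPt.frequently hp hW
  rw [frequently_atTop] at hvisit ⊢
  intro a
  obtain ⟨i, -, hi⟩ := hvisit 0
  obtain ⟨j, hj, hj'⟩ := hvisit (i + a)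
  refine ⟨j - i, by omega, ?_⟩
  rw [pow_sub x (by omega)]
  exact hWU (Set.mk_mem_prod hi hj')

theorem Complex.norm_le_norm_sum_of_re_div_nonneg {ι : Type*} {s : Finset ι} {f : ι → ℂ} {i₀ : ι}
    (hi₀ : i₀ ∈ s) (hre : ∀ i ∈ s, 0 ≤ (f i / f i₀).re) : ‖f i₀‖ ≤ ‖∑ i ∈ s, f i‖ := by
  rcases eq_or_ne (f i₀) 0 with h₀ | h₀
  · simp [h₀]
  have hsum : ∑ i ∈ s, f i = f i₀ * ∑ i ∈ s, f i / f i₀ := by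
    rw [Finset.mul_sum]
    exact Finset.sum_congr rfl fun i _ => (mul_div_cancel₀ _ h₀).symm
  have hone : 1 ≤ ‖∑ i ∈ s, f i / f i₀‖ :=
    calc (1 : ℝ) = (f i₀ / f i₀).re := by rw [div_self h₀, one_re]
      _ ≤ ∑ i ∈ s, (f i / f i₀).re := Finset.single_le_sum hre hi₀
      _ = (∑ i ∈ s, f i / f i₀).re := (re_sum _ _).symm
      _ ≤ _ := re_le_norm _
  rw [hsum, norm_mul]
  exact le_mul_of_one_le_right (norm_nonneg _) hone

theorem Complex.re_pow_nonneg_of_re_exp_arg_pow_nonneg {z : ℂ} {n : ℕ}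
    (h : 0 ≤ (exp (arg z * I) ^ n).re) : 0 ≤ (z ^ n).re := by
  rw [← norm_mul_exp_arg_mul_I z, mul_pow, ← ofReal_pow, re_ofReal_mul]
  exact mul_nonneg (by positivity) h

/-- Monsky's lemma: for finitely many complex numbers `l 0, …, l N`, there are
infinitely many integers `n ≥ 1` with `|l 0|ⁿ ≤ |∑ i, (l i)ⁿ|`. -/
theorem monsky_lemma (N : ℕ) (l : Fin (N + 1) → ℂ) :
    {n : ℕ | 1 ≤ n ∧ ‖l 0‖ ^ n ≤ ‖∑ i, l i ^ n‖}.Infinite := by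
  let x : Fin (N + 1) → Circle := fun i => Circle.exp (arg (l i / l 0))
  have hU : ∀ᶠ v : Fin (N + 1) → Circle in 𝓝 1, ∀ i, 0 < (v i : ℂ).re := by
    refine eventually_all.2 fun i => Tendsto.eventually_const_lt (v := 1) one_pos ?_
    exact (continuous_re.comp (continuous_subtype_val.comp (continuous_apply i))).tendsto 1
  have hrec := (frequently_pow_mem_nhds_one x hU).and_eventually (eventually_ge_atTop 1)
  refine (Nat.frequently_atTop_iff_infinite.1 hrec).mono ?_
  rintro n ⟨hxn, hn⟩
  refine ⟨hn, ?_⟩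
  rw [← norm_pow]
  refine norm_le_norm_sum_of_re_div_nonneg (f := fun i => l i ^ n) (Finset.mem_univ 0) fun i _ => ?_
  rw [← div_pow]
  exact re_pow_nonneg_of_re_exp_arg_pow_nonneg (hxn i).le
end

section
/- Let V be a real vector space with a symmetric bilinear form β : V × V → ℝ, and let v₀₁, v₁₀, h ∈ V satisfy β(v₀₁,v₀₁)=0, β(v₁₀,v₁₀)=0, β(v₀₁,v₁₀)=1, and the Hodge property: for all x ∈ V, β(x,h)=0 implies β(x,x) ≤ 0, where h = v₀₁ + v₁₀. Then for all x ∈ V, β(x,x) ≤ 2·β(x,v₀₁)·β(x,v₁₀). -/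
/-- Castelnuovo–Severi type inequality from the Hodge property. -/
theorem castelnuovo_severi (V : Type*) [AddCommGroup V] [Module ℝ V]
    (β : V →ₗ[ℝ] V →ₗ[ℝ] ℝ) (hsymm : ∀ x y, β x y = β y x)
    (v01 v10 : V)
    (h01 : β v01 v01 = 0) (h10 : β v10 v10 = 0) (h0110 : β v01 v10 = 1)
    (hHodge : ∀ x : V, β x (v01 + v10) = 0 → β x x ≤ 0) :
    ∀ x : V, β x x ≤ 2 * β x v01 * β x v10 := by
  intro x
  set a := β x v01 with ha
  set b := β x v10 with hb
  have key := hHodge (x - a • v10 - b • v01) ?_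
  · have h1 := hsymm v10 v01
    simp only [map_sub, map_smul, LinearMap.sub_apply, LinearMap.smul_apply, smul_eq_mul,
      hsymm v10 x, hsymm v01 x, h01, h10, h0110, h1] at key
    nlinarith [key]
  · simp only [map_sub, map_smul, map_add, LinearMap.sub_apply, LinearMap.smul_apply,
      smul_eq_mul, h01, h10, h0110, hsymm v10 v01]
    ring
end

section
/- Let F be a linear operator on a finite-dimensional complex Hilbert space K whose Jordan form contains a Jordan block of size m > 1 for an eigenvalue λ with |λ| = q^{1/2}, q > 1, and all eigenvalues μ of F satisfy |μ| ≤ q^{1/2}. Then for any orthonormal basis {e_i} of K, the quantity ∑_{i} ‖Fⁿe_i‖² is NOT O(qⁿ): there is a constant c > 0 such that ∑_i ‖Fⁿe_i‖² ≥ c·qⁿ·n^{2(m−1)} for all large n, where m is the maximal Jordan block size. -/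
/-!
On the Jordan chain of `v` write `F = λ + N`. Then `λ⁻ⁿ Fⁿ v = ∑_{k<m} C(n,k) λ⁻ᵏ Nᵏ v`, and since
`C(n,k) = Θ(nᵏ)` the top term `C(n,m-1) λ^{-(m-1)} N^{m-1} v ≠ 0` dominates: `‖Fⁿ v‖ ≥ c qⁿᐟ² n^{m-1}`
for large `n`. Expanding `v` in the basis and applying Cauchy–Schwarz gives
`‖Fⁿ v‖² ≤ ‖v‖² ∑ᵢ ‖Fⁿ eᵢ‖²`.
-/

open Finset Filter Asymptotics

theorem Module.End.pow_apply_eq_sum_choose {R V : Type*} [CommRing R] [AddCommGroup V]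
    [Module R V] (T : Module.End R V) (lam : R) (v : V) (n : ℕ) :
    (T ^ n) v =
      ∑ k ∈ range (n + 1), ((n.choose k : R) * lam ^ (n - k)) • ((T - lam • 1) ^ k) v := by
  have hcomm : Commute (T - lam • 1) (lam • 1) := (Commute.one_right _).smul_right lam
  conv_lhs => rw [← sub_add_cancel T (lam • 1), hcomm.add_pow, LinearMap.sum_apply]
  refine sum_congr rfl fun k _ ↦ ?_
  simp only [smul_pow, one_pow, Module.End.mul_apply, Module.End.natCast_apply, map_nsmul,
    LinearMap.smul_apply, Module.End.one_apply, mul_smul, Nat.cast_smul_eq_nsmul, map_smul]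

theorem Module.End.pow_apply_eq_smul_sum_of_pow_apply_eq_zero {K V : Type*} [Field K]
    [AddCommGroup V] [Module K V] (T : Module.End K V) {lam : K} (hlam : lam ≠ 0) {v : V}
    {M : ℕ} (hv : ((T - lam • 1) ^ (M + 1)) v = 0) (n : ℕ) :
    (T ^ n) v = lam ^ n •
      ∑ k ∈ range (M + 1), (n.choose k : K) • (lam ^ k)⁻¹ • ((T - lam • 1) ^ k) v := by
  set f : ℕ → V := fun k ↦ ((n.choose k : K) * lam ^ (n - k)) • ((T - lam • 1) ^ k) v
  have hsub {a : ℕ} (h : a ≤ n + M + 1) : range a ⊆ range (n + M + 1) := range_subset_range.mpr h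
  calc (T ^ n) v = ∑ k ∈ range (n + M + 1), f k := by
        rw [T.pow_apply_eq_sum_choose lam]
        refine sum_subset (hsub (by omega)) fun k _ hk ↦ ?_
        simp [Nat.choose_eq_zero_of_lt (by simpa using hk : n < k)]
    _ = ∑ k ∈ range (M + 1), f k := by
        refine (sum_subset (hsub (by omega)) fun k _ hk ↦ ?_).symm
        simp [f, Module.End.pow_map_zero_of_le (by simpa using hk : M + 1 ≤ k) hv]
    _ = _ := by
        rw [smul_sum]
        refine sum_congr rfl fun k _ ↦ ?_
        rcases le_or_gt k n with hkn | hnk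
        · simp only [f, smul_smul, pow_sub₀ lam hlam hkn]
          ring_nf
        · simp [f, Nat.choose_eq_zero_of_lt hnk]

section Growth

variable {𝕜 E : Type*} [RCLike 𝕜] [NormedAddCommGroup E] [NormedSpace 𝕜 E]

theorem isBigO_sum_range_succ_choose_smul {u : ℕ → E} {M : ℕ} (hu : u M ≠ 0) :
    (fun n : ℕ ↦ (n : ℝ) ^ M) =O[atTop]
      fun n ↦ ∑ k ∈ range (M + 1), (n.choose k : 𝕜) • u k := by
  have norm_choose_smul (k n : ℕ) : ‖(n.choose k : 𝕜) • u k‖ = ‖u k‖ * n.choose k := by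
    rw [norm_smul, RCLike.norm_natCast, mul_comm]
  have top : (fun n : ℕ ↦ (n.choose M : 𝕜) • u M) =Θ[atTop] fun n ↦ (n : ℝ) ^ M := by
    rw [← isTheta_norm_left]
    simp_rw [norm_choose_smul]
    exact (isTheta_choose M).const_mul_left (norm_ne_zero_iff.mpr hu)
  have lower : (fun n : ℕ ↦ ∑ k ∈ range M, (n.choose k : 𝕜) • u k) =o[atTop]
      fun n ↦ (n.choose M : 𝕜) • u M := by
    refine IsLittleO.trans_isBigO ?_ top.isBigO_symm
    refine IsLittleO.fun_sum fun k hk ↦ ?_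
    have hk : (fun n : ℕ ↦ (n : ℝ) ^ k) =o[atTop] fun n ↦ (n : ℝ) ^ M :=
      (isLittleO_pow_pow_atTop_of_lt (mem_range.mp hk)).comp_tendsto tendsto_natCast_atTop_atTop
    refine IsBigO.trans_isLittleO ?_ hk
    rw [← isBigO_norm_left]
    simp_rw [norm_choose_smul]
    exact (isTheta_choose k).isBigO.const_mul_left _
  simp_rw [sum_range_succ]
  exact top.isBigO_symm.trans lower.right_isBigO_add

theorem Module.End.isBigO_pow_apply_of_jordan_chain (T : Module.End 𝕜 E) {lam : 𝕜}
    (hlam : lam ≠ 0) {v : E} {M : ℕ} (hvM : ((T - lam • 1) ^ (M + 1)) v = 0)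
    (hv : ((T - lam • 1) ^ M) v ≠ 0) :
    (fun n : ℕ ↦ ‖lam‖ ^ n * (n : ℝ) ^ M) =O[atTop] fun n ↦ (T ^ n) v := by
  simp_rw [T.pow_apply_eq_smul_sum_of_pow_apply_eq_zero hlam hvM, ← smul_eq_mul (a := ‖lam‖ ^ _)]
  refine IsBigO.smul (isBigO_of_le _ fun n ↦ by simp) (isBigO_sum_range_succ_choose_smul ?_)
  exact smul_ne_zero (inv_ne_zero (pow_ne_zero M hlam)) hv

end Growth

theorem OrthonormalBasis.norm_apply_sq_le {ι 𝕜 E F : Type*} [Fintype ι] [RCLike 𝕜]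
    [NormedAddCommGroup E] [InnerProductSpace 𝕜 E] [NormedAddCommGroup F] [NormedSpace 𝕜 F]
    (b : OrthonormalBasis ι 𝕜 E) (T : E →ₗ[𝕜] F) (x : E) :
    ‖T x‖ ^ 2 ≤ ‖x‖ ^ 2 * ∑ i, ‖T (b i)‖ ^ 2 := by
  have hTx : ‖T x‖ ≤ ∑ i, ‖b.repr x i‖ * ‖T (b i)‖ := by
    conv_lhs => rw [← b.sum_repr x, map_sum]
    refine (norm_sum_le _ _).trans_eq ?_
    simp only [map_smul, norm_smul]
  calc ‖T x‖ ^ 2 ≤ (∑ i, ‖b.repr x i‖ * ‖T (b i)‖) ^ 2 := by gcongr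
    _ ≤ (∑ i, ‖b.repr x i‖ ^ 2) * ∑ i, ‖T (b i)‖ ^ 2 := sum_mul_sq_le_sq_mul_sq _ _ _
    _ = ‖x‖ ^ 2 * ∑ i, ‖T (b i)‖ ^ 2 := by
        simp only [b.repr_apply_apply, b.sum_sq_norm_inner_right]

theorem Asymptotics.IsBigO.exists_pos_eventually_mul_le {α F : Type*}
    [SeminormedAddCommGroup F] {l : Filter α} {f : α → ℝ} {g : α → F} (h : f =O[l] g) :
    ∃ c > 0, ∀ᶠ x in l, c * f x ≤ ‖g x‖ := by
  obtain ⟨C, hC, hfg⟩ := h.exists_pos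
  refine ⟨C⁻¹, inv_pos.mpr hC, hfg.bound.mono fun x hx ↦ ?_⟩
  rw [inv_mul_le_iff₀ hC]
  exact (le_abs_self _).trans hx

theorem non_semisimple_growth_general (K : Type*) [NormedAddCommGroup K] [InnerProductSpace ℂ K]
    (d : ℕ) (q : ℝ) (hq : 1 < q) (F : Module.End ℂ K)
    (m : ℕ) (lam : ℂ) (hlam : ‖lam‖ = Real.sqrt q)
    (v : K) (hv : ((F - lam • 1) ^ m) v = 0 ∧ ((F - lam • 1) ^ (m - 1)) v ≠ 0)
    (e : OrthonormalBasis (Fin d) ℂ K) :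
    ∃ c : ℝ, 0 < c ∧ ∃ N₀ : ℕ, ∀ n ≥ N₀,
      c * q ^ n * (n : ℝ) ^ (2 * (m - 1)) ≤ ∑ i, ‖(F ^ n) (e i)‖ ^ 2 := by
  obtain ⟨M, rfl⟩ : ∃ M, m = M + 1 :=
    Nat.exists_eq_add_one.mpr (Nat.pos_of_ne_zero fun h ↦ by simp_all)
  rw [Nat.add_sub_cancel] at hv ⊢
  have hlam0 : lam ≠ 0 := norm_pos_iff.mp (hlam ▸ Real.sqrt_pos.mpr (by linarith))
  have hsum_nonneg (n : ℕ) : 0 ≤ ∑ i, ‖(F ^ n) (e i)‖ ^ 2 := by positivity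
  have chain := (F.isBigO_pow_apply_of_jordan_chain hlam0 hv.1 hv.2).norm_right.pow 2
  have hilbertSchmidt : (fun n ↦ ‖(F ^ n) v‖ ^ 2) =O[atTop] fun n ↦ ∑ i, ‖(F ^ n) (e i)‖ ^ 2 :=
    .of_bound (‖v‖ ^ 2) <| .of_forall fun n ↦ by
      simpa [Real.norm_of_nonneg (hsum_nonneg n)] using e.norm_apply_sq_le (F ^ n) v
  have growth : (fun n : ℕ ↦ q ^ n * (n : ℝ) ^ (2 * M)) =O[atTop]
      fun n ↦ ∑ i, ‖(F ^ n) (e i)‖ ^ 2 := by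
    refine IsBigO.trans ?_ (chain.trans hilbertSchmidt)
    refine (isBigO_refl _ _).congr_right fun n ↦ ?_
    rw [mul_pow, pow_right_comm, hlam, Real.sq_sqrt (by linarith), ← pow_mul, mul_comm M]
  obtain ⟨c, hc, hev⟩ := growth.exists_pos_eventually_mul_le
  obtain ⟨N₀, hN₀⟩ := eventually_atTop.mp hev
  refine ⟨c, hc, N₀, fun n hn ↦ ?_⟩
  simpa [mul_assoc, Real.norm_of_nonneg (hsum_nonneg n)] using hN₀ n hn

/-- If `F` has all eigenvalues of modulus `≤ √q` (`q > 1`), has a Jordan block of size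
`m ≥ 2` for an eigenvalue `λ` of modulus exactly `√q`, and `m` is the maximal Jordan
block size among eigenvalues of modulus `√q`, then `∑ i ‖Fⁿ eᵢ‖²` grows at least like
`c·qⁿ·n^{2(m−1)}`; in particular it is not `O(qⁿ)`. -/
theorem non_semisimple_growth (K : Type*) [NormedAddCommGroup K] [InnerProductSpace ℂ K]
    [FiniteDimensional ℂ K] (d : ℕ) (hd : Module.finrank ℂ K = d)
    (q : ℝ) (hq : 1 < q) (F : Module.End ℂ K)
    (hspec : ∀ μ ∈ spectrum ℂ F, ‖μ‖ ≤ Real.sqrt q)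
    (m : ℕ) (hm : 2 ≤ m) (lam : ℂ) (hlam : ‖lam‖ = Real.sqrt q)
    (v : K) (hv : ((F - lam • 1) ^ m) v = 0 ∧ ((F - lam • 1) ^ (m - 1)) v ≠ 0)
    (hmax : ∀ μ : ℂ, ‖μ‖ = Real.sqrt q → ∀ w : K,
      (∃ k : ℕ, ((F - μ • 1) ^ k) w = 0) → ((F - μ • 1) ^ m) w = 0)
    (e : OrthonormalBasis (Fin d) ℂ K) :
    ∃ c : ℝ, 0 < c ∧ ∃ N₀ : ℕ, ∀ n ≥ N₀,
      c * q ^ n * (n : ℝ) ^ (2 * (m - 1)) ≤ ∑ i, ‖(F ^ n) (e i)‖ ^ 2 :=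
  non_semisimple_growth_general K d q hq F m lam hlam v hv e
end

section
/- Let λ₁, …, λ_N ∈ ℂ and q > 0 such that |λ₁| = q^{1/2}·(1+ε) for some ε > 0. Then the sequence νₙ = ∑_{i=1}^N λ_iⁿ is not O(q^{n/2}): for every constant C > 0 there exist infinitely many n with |νₙ| > C·q^{n/2}. -/
/-!
If `‖νₙ‖ ≤ C q^{n/2}` for all large `n`, take the polynomial `P` whose roots are the values
`λ_i ≠ λ₁`. Then `∑ₛ P_s ν_{n+s} = k P(λ₁) λ₁ⁿ` with `k ≥ 1` the multiplicity of `λ₁`, so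
`λ₁ⁿ = O(q^{n/2})`, which is impossible when `|λ₁| > q^{1/2}`.
-/

open Polynomial Finset Filter Asymptotics

variable {ι : Type*} [Fintype ι]

theorem sum_coeff_mul_sum_pow_add {R : Type*} [CommSemiring R] (f : ι → R) (P : R[X]) (n : ℕ) :
    ∑ s ∈ range (P.natDegree + 1), P.coeff s * ∑ j, f j ^ (n + s) =
      ∑ j, P.eval (f j) * f j ^ n := by
  simp_rw [mul_sum]
  rw [sum_comm]
  refine sum_congr rfl fun j _ => ?_
  rw [eval_eq_sum_range, sum_mul]
  refine sum_congr rfl fun s _ => ?_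
  ring

theorem exists_poly_sum_eval_mul_pow_eq {K : Type*} [Field K] [CharZero K]
    (f : ι → K) (i : ι) :
    ∃ P : K[X], ∃ c : K, c ≠ 0 ∧ ∀ n : ℕ, ∑ j, P.eval (f j) * f j ^ n = c * f i ^ n := by
  classical
  let P : K[X] := ∏ μ ∈ (univ.image f).erase (f i), (X - C μ)
  have hP_eval {x : K} : P.eval x = 0 ↔ x ≠ f i ∧ x ∈ univ.image f := by
    simp [P, eval_prod, prod_eq_zero_iff, sub_eq_zero]
  have hP_ne : P.eval (f i) ≠ 0 := by simp [hP_eval]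
  refine ⟨P, #{j | f j = f i} * P.eval (f i), mul_ne_zero ?_ hP_ne, fun n => ?_⟩
  · exact Nat.cast_ne_zero.2 (card_pos.2 ⟨i, by simp⟩).ne'
  have hterm (j : ι) :
      P.eval (f j) * f j ^ n = if f j = f i then P.eval (f i) * f i ^ n else 0 := by
    split_ifs with h
    · rw [h]
    · rw [hP_eval.2 ⟨h, mem_image_of_mem f (mem_univ j)⟩, zero_mul]
  rw [sum_congr rfl fun j _ => hterm j, sum_ite, sum_const_zero, add_zero, sum_const,
    nsmul_eq_mul, mul_assoc]

theorem exists_sum_mul_sum_pow_add_eq {K : Type*} [Field K] [CharZero K]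
    (f : ι → K) (i : ι) :
    ∃ m : ℕ, ∃ a : ℕ → K, ∃ c : K, c ≠ 0 ∧
      ∀ n : ℕ, ∑ s ∈ range m, a s * ∑ j, f j ^ (n + s) = c * f i ^ n := by
  obtain ⟨P, c, hc, hP⟩ := exists_poly_sum_eval_mul_pow_eq f i
  exact ⟨P.natDegree + 1, P.coeff, c, hc, fun n => by rw [sum_coeff_mul_sum_pow_add, hP]⟩

theorem norm_le_of_isBigO_sum_pow {K : Type*} [NormedField K] [CharZero K]
    {f : ι → K} {r : ℝ} (hr : 0 ≤ r) (h : (fun n => ∑ j, f j ^ n) =O[atTop] fun n => r ^ n)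
    (i : ι) : ‖f i‖ ≤ r := by
  obtain ⟨m, a, c, hc, hcomb⟩ := exists_sum_mul_sum_pow_add_eq f i
  have hshift (s : ℕ) : (fun n => a s * ∑ j, f j ^ (n + s)) =O[atTop] fun n => r ^ n := by
    have hpow : (fun n => r ^ (n + s)) =O[atTop] fun n => r ^ n := by
      simp_rw [pow_add]
      exact (isBigO_const_mul_self (r ^ s) (fun n => r ^ n) atTop).congr_left
        fun n => mul_comm _ _
    exact ((h.comp_tendsto (tendsto_add_atTop_nat s)).trans hpow).const_mul_left (a s)
  have hpow_i : (fun n => f i ^ n) =O[atTop] fun n => r ^ n := by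
    rw [← isBigO_const_mul_left_iff hc]
    simpa only [← hcomb, sum_fn] using IsBigO.sum (s := range m) fun s _ => hshift s
  by_contra! hlt
  have hne : f i ≠ 0 := norm_pos_iff.1 (hr.trans_lt hlt)
  refine isLittleO_irrefl (Eventually.frequently (Eventually.of_forall fun n => pow_ne_zero n hne))
    (hpow_i.trans_isLittleO ((isLittleO_pow_pow_of_lt_left hr hlt).trans_isBigO ?_))
  exact (isBigO_refl (fun n => f i ^ n) atTop).norm_left.congr_left fun n => norm_pow _ _

/-- If `|l 0| = √q (1+ε)` with `ε > 0`, then `νₙ = ∑ i (l i)ⁿ` is not `O(q^{n/2})`. -/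
theorem not_bigO_of_eigenvalue_off_line (N : ℕ) (l : Fin (N + 1) → ℂ)
    (q : ℝ) (hq : 0 < q) (ε : ℝ) (hε : 0 < ε)
    (h1 : ‖l 0‖ = Real.sqrt q * (1 + ε)) :
    ∀ C : ℝ, 0 < C →
      {n : ℕ | C * Real.sqrt q ^ n < ‖∑ i, l i ^ n‖}.Infinite := by
  intro C _ hfin
  have hbigO : (fun n => ∑ i, l i ^ n) =O[atTop] fun n => Real.sqrt q ^ n := by
    refine IsBigO.of_bound C ?_
    rw [← Nat.cofinite_eq_atTop]
    filter_upwards [hfin.eventually_cofinite_notMem] with n hn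
    simpa [abs_of_nonneg (Real.sqrt_nonneg q)] using hn
  have hle := norm_le_of_isBigO_sum_pow (Real.sqrt_nonneg q) hbigO 0
  have hsqrt := Real.sqrt_pos.2 hq
  nlinarith
end
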